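/- Let X be the ℓ²-direct sum of the real spaces ℓ²ₚ (two-dimensional Lp spaces) for p = 2, 3, 4, …. Then there do not exist x, y ∈ X with ‖x‖ = ‖y‖ = ‖(x+y)/2‖ = ‖(x−y)/2‖ = 1. -/

import Mathlib

open scoped ENNReal
open scoped NNReal

/-- The two-dimensional real `Lᵖ` space `ℓ²ₚ` with `p = j + 2`. -/
noncomputable def Ep (j : ℕ) : Type := PiLp ((j : ℝ≥0∞) + 2) (fun _ : Fin 2 => ℝ)

instance (j : ℕ) : Fact ((1 : ℝ≥0∞) ≤ (j : ℝ≥0∞) + 2) :=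
  ⟨le_trans one_le_two le_add_self⟩

noncomputable instance (j : ℕ) : NormedAddCommGroup (Ep j) :=
  inferInstanceAs (NormedAddCommGroup (PiLp ((j : ℝ≥0∞) + 2) (fun _ : Fin 2 => ℝ)))

noncomputable instance (j : ℕ) : NormedSpace ℝ (Ep j) :=
  inferInstanceAs (NormedSpace ℝ (PiLp ((j : ℝ≥0∞) + 2) (fun _ : Fin 2 => ℝ)))

lemma real_add_rpow_le {a b r : ℝ} (ha : 0 ≤ a) (hb : 0 ≤ b) (hr : 1 ≤ r) :
    a ^ r + b ^ r ≤ (a + b) ^ r := by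
  lift a to ℝ≥0 using ha
  lift b to ℝ≥0 using hb
  exact_mod_cast NNReal.add_rpow_le_rpow_add a b hr

lemma real_rpow_add_le {a b r : ℝ} (ha : 0 ≤ a) (hb : 0 ≤ b) (hr : 1 ≤ r) :
    (a + b) ^ r ≤ 2 ^ (r - 1) * (a ^ r + b ^ r) := by
  lift a to ℝ≥0 using ha
  lift b to ℝ≥0 using hb
  exact_mod_cast NNReal.rpow_add_le_mul_rpow_add_rpow a b hr

lemma scalar_clarkson {q : ℝ} (hq : 2 ≤ q) (s t : ℝ) :
    |s + t| ^ q + |s - t| ^ q ≤ 2 ^ (q - 1) * (|s| ^ q + |t| ^ q) := by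
  have hq2 : (1 : ℝ) ≤ q / 2 := by linarith
  have key : ∀ r : ℝ, |r| ^ q = (r ^ 2) ^ (q / 2) := by
    intro r
    rw [← sq_abs, ← Real.rpow_natCast |r| 2, ← Real.rpow_mul (abs_nonneg r)]
    norm_num
    rw [show (2 : ℝ) * (q / 2) = q by ring]
  rw [key (s + t), key (s - t), key s, key t]
  calc ((s + t) ^ 2) ^ (q / 2) + ((s - t) ^ 2) ^ (q / 2)
      ≤ ((s + t) ^ 2 + (s - t) ^ 2) ^ (q / 2) :=
        real_add_rpow_le (sq_nonneg _) (sq_nonneg _) hq2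
    _ = (2 : ℝ) ^ (q / 2) * (s ^ 2 + t ^ 2) ^ (q / 2) := by
        rw [show (s + t) ^ 2 + (s - t) ^ 2 = 2 * (s ^ 2 + t ^ 2) by ring,
          Real.mul_rpow (by norm_num) (by positivity)]
    _ ≤ (2 : ℝ) ^ (q / 2) * (2 ^ (q / 2 - 1) * ((s ^ 2) ^ (q / 2) + (t ^ 2) ^ (q / 2))) := by
        exact mul_le_mul_of_nonneg_left
          (real_rpow_add_le (sq_nonneg _) (sq_nonneg _) hq2) (by positivity)
    _ = 2 ^ (q - 1) * ((s ^ 2) ^ (q / 2) + (t ^ 2) ^ (q / 2)) := by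
        rw [← mul_assoc, ← Real.rpow_add (by norm_num)]
        ring_nf

lemma Ep_norm_rpow (j : ℕ) (x : Ep j) :
    ‖x‖ ^ ((j : ℝ) + 2) = ∑ i : Fin 2, |WithLp.ofLp x i| ^ ((j : ℝ) + 2) := by
  have htr : ((j : ℝ≥0∞) + 2).toReal = (j : ℝ) + 2 := by
    rw [ENNReal.toReal_add (by simp) (by simp)]; simp
  have hpos : 0 < ((j : ℝ≥0∞) + 2).toReal := by rw [htr]; positivity
  have := PiLp.norm_eq_sum hpos (x : PiLp ((j : ℝ≥0∞) + 2) (fun _ : Fin 2 => ℝ))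
  rw [htr] at this
  have hS : (0:ℝ) ≤ ∑ i : Fin 2, ‖WithLp.ofLp x i‖ ^ ((j:ℝ) + 2) :=
    Finset.sum_nonneg fun i _ => Real.rpow_nonneg (norm_nonneg _) _
  have e := congrArg (· ^ ((j:ℝ) + 2)) this
  rw [← Real.rpow_mul hS, one_div, inv_mul_cancel₀ (by positivity), Real.rpow_one] at e
  exact e.trans (by simp [Real.norm_eq_abs])

lemma Ep_clarkson (j : ℕ) (x y : Ep j) :
    ‖x + y‖ ^ ((j : ℝ) + 2) + ‖x - y‖ ^ ((j : ℝ) + 2)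
      ≤ 2 ^ ((j : ℝ) + 1) * (‖x‖ ^ ((j : ℝ) + 2) + ‖y‖ ^ ((j : ℝ) + 2)) := by
  have hq : (2 : ℝ) ≤ (j : ℝ) + 2 := by have := Nat.cast_nonneg (α := ℝ) j; linarith
  have h1 : (j : ℝ) + 1 = ((j : ℝ) + 2) - 1 := by ring
  rw [Ep_norm_rpow, Ep_norm_rpow, Ep_norm_rpow, Ep_norm_rpow, h1]
  have hadd : ∀ i : Fin 2, WithLp.ofLp (x + y) i = WithLp.ofLp x i + WithLp.ofLp y i := fun i => rfl
  have hsub : ∀ i : Fin 2, WithLp.ofLp (x - y) i = WithLp.ofLp x i - WithLp.ofLp y i := fun i => rfl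
  calc (∑ i : Fin 2, |WithLp.ofLp (x + y) i| ^ ((j : ℝ) + 2)) + ∑ i : Fin 2, |WithLp.ofLp (x - y) i| ^ ((j : ℝ) + 2)
      = ∑ i : Fin 2, (|WithLp.ofLp x i + WithLp.ofLp y i| ^ ((j : ℝ) + 2) + |WithLp.ofLp x i - WithLp.ofLp y i| ^ ((j : ℝ) + 2)) := by
        rw [Finset.sum_add_distrib]
        simp only [hadd, hsub]
    _ ≤ ∑ i : Fin 2, 2 ^ (((j : ℝ) + 2) - 1) * (|WithLp.ofLp x i| ^ ((j : ℝ) + 2) + |WithLp.ofLp y i| ^ ((j : ℝ) + 2)) :=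
        Finset.sum_le_sum fun i _ => scalar_clarkson hq (WithLp.ofLp x i) (WithLp.ofLp y i)
    _ = 2 ^ (((j : ℝ) + 2) - 1) * ((∑ i : Fin 2, |WithLp.ofLp x i| ^ ((j : ℝ) + 2)) +
          ∑ i : Fin 2, |WithLp.ofLp y i| ^ ((j : ℝ) + 2)) := by
        rw [← Finset.mul_sum, Finset.sum_add_distrib]

lemma Ep_no_square (j : ℕ) {x y : Ep j} {a : ℝ} (hx : ‖x‖ = a) (hy : ‖y‖ = a)
    (hs : ‖x + y‖ = 2 * a) (hd : ‖x - y‖ = 2 * a) : a = 0 := by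
  have ha : 0 ≤ a := hx ▸ norm_nonneg x
  have hcl := Ep_clarkson j x y
  rw [hx, hy, hs, hd] at hcl
  have h2a : (2 * a) ^ ((j : ℝ) + 2) = 2 ^ ((j : ℝ) + 2) * a ^ ((j : ℝ) + 2) :=
    Real.mul_rpow (by norm_num) ha
  have hexp : (2 : ℝ) ^ ((j : ℝ) + 1) * 2 ^ (1 : ℝ) = 2 ^ ((j : ℝ) + 2) := by
    rw [← Real.rpow_add two_pos, show (j:ℝ) + 1 + 1 = (j:ℝ) + 2 by ring]
  rw [Real.rpow_one] at hexp
  have hpow_pos : (0 : ℝ) < 2 ^ ((j : ℝ) + 2) := Real.rpow_pos_of_pos two_pos _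
  have hpow_pos' : (0 : ℝ) < 2 ^ ((j : ℝ) + 1) := Real.rpow_pos_of_pos two_pos _
  have hannn : 0 ≤ a ^ ((j : ℝ) + 2) := Real.rpow_nonneg ha _
  have hz : a ^ ((j : ℝ) + 2) = 0 := by nlinarith
  exact (Real.rpow_eq_zero ha (by positivity)).mp hz


lemma sq_bound {a b s d : ℝ} (hs : 0 ≤ s) (hd : 0 ≤ d)
    (hsb : s ≤ 2⁻¹ * (a + b)) (hdb : d ≤ 2⁻¹ * (a + b)) :
    s ^ 2 + d ^ 2 ≤ a ^ 2 + b ^ 2 := by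
  nlinarith [mul_self_le_mul_self hs hsb, mul_self_le_mul_self hd hdb, sq_nonneg (a - b)]

lemma square_forcing {a b s d : ℝ} (ha : 0 ≤ a) (hb : 0 ≤ b) (hs : 0 ≤ s) (hd : 0 ≤ d)
    (hsb : s ≤ 2⁻¹ * (a + b)) (hdb : d ≤ 2⁻¹ * (a + b))
    (heq : a ^ 2 + b ^ 2 = s ^ 2 + d ^ 2) :
    b = a ∧ s = a ∧ d = a := by
  have h1 := mul_self_le_mul_self hs hsb
  have h2 := mul_self_le_mul_self hd hdb
  have hab2 : (a - b) ^ 2 ≤ 0 := by nlinarith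
  have hab : a - b = 0 := by
    have := le_antisymm hab2 (sq_nonneg (a - b))
    exact sq_eq_zero_iff.mp this
  have hba : b = a := by linarith
  subst hba
  have hsa : s ≤ b := by linarith
  have hda : d ≤ b := by linarith
  have hs2 : s ^ 2 ≤ b ^ 2 := by nlinarith
  have hd2 : d ^ 2 ≤ b ^ 2 := by nlinarith
  have hs2' : s ^ 2 = b ^ 2 := by linarith
  have hd2' : d ^ 2 = b ^ 2 := by linarith
  have hse : s = b := by
    rcases mul_eq_zero.mp (show (b - s) * (b + s) = 0 by nlinarith) with h | h
    · linarith
    · linarith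
  have hde : d = b := by
    rcases mul_eq_zero.mp (show (b - d) * (b + d) = 0 by nlinarith) with h | h
    · linarith
    · linarith
  exact ⟨rfl, hse, hde⟩

/-- In the `ℓ²`-direct sum `X = (⊕ₚ₌₂^∞ ℓ²ₚ)_{ℓ²}` there is no pair `x, y` with
`‖x‖ = ‖y‖ = ‖(x+y)/2‖ = ‖(x−y)/2‖ = 1`, i.e. no square on the unit sphere. -/
theorem no_square_on_unit_sphere :
    ¬ ∃ x y : lp Ep 2, ‖x‖ = 1 ∧ ‖y‖ = 1 ∧
      ‖(2⁻¹ : ℝ) • (x + y)‖ = 1 ∧ ‖(2⁻¹ : ℝ) • (x - y)‖ = 1 := by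
  rintro ⟨x, y, hx, hy, hu, hv⟩
  set u : lp Ep 2 := (2⁻¹ : ℝ) • (x + y) with hu_def
  set v : lp Ep 2 := (2⁻¹ : ℝ) • (x - y) with hv_def
  have h2 : (0 : ℝ) < (2 : ℝ≥0∞).toReal := by norm_num
  have htr : ((2 : ℝ≥0∞)).toReal = (2 : ℝ) := by norm_num
  have hsum : ∀ f : lp Ep 2, Summable fun j => ‖f j‖ ^ (2 : ℝ) := by
    intro f
    have := (lp.memℓp f).summable h2
    rwa [htr] at this
  have htsum : ∀ f : lp Ep 2, ‖f‖ = 1 → ∑' j, ‖f j‖ ^ (2 : ℝ) = 1 := by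
    intro f hf
    have := lp.norm_rpow_eq_tsum h2 f
    rw [htr, hf] at this
    simpa using this.symm
  have huj : ∀ j, ‖u j‖ = 2⁻¹ * ‖x j + y j‖ := by
    intro j
    have h1 : u j = (2⁻¹ : ℝ) • (x j + y j) := by
      rw [hu_def]
      rw [lp.coeFn_smul, Pi.smul_apply, lp.coeFn_add, Pi.add_apply]
    rw [h1, norm_smul]
    norm_num
  have hvj : ∀ j, ‖v j‖ = 2⁻¹ * ‖x j - y j‖ := by
    intro j
    have h1 : v j = (2⁻¹ : ℝ) • (x j - y j) := by
      rw [hv_def]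
      rw [lp.coeFn_smul, Pi.smul_apply, lp.coeFn_sub, Pi.sub_apply]
    rw [h1, norm_smul]
    norm_num
  have rpow2 : ∀ r : ℝ, r ^ (2 : ℝ) = r ^ 2 := fun r => by
    rw [show (2 : ℝ) = ((2 : ℕ) : ℝ) by norm_num, Real.rpow_natCast]
  set g : ℕ → ℝ := fun j =>
    (‖x j‖ ^ (2 : ℝ) + ‖y j‖ ^ (2 : ℝ)) - (‖u j‖ ^ (2 : ℝ) + ‖v j‖ ^ (2 : ℝ)) with hg_def
  have hub : ∀ j, ‖u j‖ ≤ 2⁻¹ * (‖x j‖ + ‖y j‖) := by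
    intro j
    rw [huj j]
    have := norm_add_le (x j) (y j)
    nlinarith [norm_nonneg (x j + y j)]
  have hvb : ∀ j, ‖v j‖ ≤ 2⁻¹ * (‖x j‖ + ‖y j‖) := by
    intro j
    rw [hvj j]
    have := norm_sub_le (x j) (y j)
    nlinarith [norm_nonneg (x j - y j)]
  have hg_nonneg : ∀ j, 0 ≤ g j := by
    intro j
    simp only [hg_def, rpow2]
    have := sq_bound (norm_nonneg (u j)) (norm_nonneg (v j)) (hub j) (hvb j)
    linarith
  have hg_sum : Summable g := ((hsum x).add (hsum y)).sub ((hsum u).add (hsum v))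
  have hg_tsum : ∑' j, g j = 0 := by
    rw [hg_def]
    rw [Summable.tsum_sub ((hsum x).add (hsum y)) ((hsum u).add (hsum v)),
      Summable.tsum_add (hsum x) (hsum y), Summable.tsum_add (hsum u) (hsum v),
      htsum x hx, htsum y hy, htsum u hu, htsum v hv]
    norm_num
  have hg_zero : ∀ j, g j = 0 := by
    intro j
    refine le_antisymm ?_ (hg_nonneg j)
    have := Summable.le_tsum hg_sum j fun k _ => hg_nonneg k
    rwa [hg_tsum] at this
  -- per component, all four norms are equal, so each component of x vanishes
  have hx_zero : ∀ j, ‖x j‖ = 0 := by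
    intro j
    have hgj := hg_zero j
    simp only [hg_def, rpow2] at hgj
    have ha := norm_nonneg (x j)
    have hb := norm_nonneg (y j)
    have hs := norm_nonneg (u j)
    have hd := norm_nonneg (v j)
    have heq : ‖x j‖ ^ 2 + ‖y j‖ ^ 2 = ‖u j‖ ^ 2 + ‖v j‖ ^ 2 := by linarith
    obtain ⟨hab', hs_eq, hd_eq⟩ := square_forcing ha hb hs hd (hub j) (hvb j) heq
    have hab : ‖x j‖ = ‖y j‖ := hab'.symm
    have hsum_norm : ‖x j + y j‖ = 2 * ‖x j‖ := by
      have := huj j; rw [hs_eq] at this; linarith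
    have hdiff_norm : ‖x j - y j‖ = 2 * ‖x j‖ := by
      have := hvj j; rw [hd_eq] at this; linarith
    have := Ep_no_square j rfl hab.symm hsum_norm hdiff_norm
    exact this
  have : (1 : ℝ) = 0 := by
    rw [← htsum x hx]
    have : ∀ j, ‖x j‖ ^ (2 : ℝ) = 0 := by
      intro j; rw [hx_zero j, rpow2]; norm_num
    simp [this]
  norm_num at this
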